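/- arXiv:2405.20524 — 13 statements merged into one kernel-verified Lean document; each statement's English description precedes it below -/
import Mathlib

section
/- Let q be a prime power, let F be a finite field with q^6 elements, and let a ∈ F satisfy 1 + a^{q^3+1} + a^{q^4+q} + a^{q^5+q^2} = 0. Then every X ∈ F satisfying a·X^{q^2} = X^q + a^{q^2}·X also satisfies X^{q^5+q^2} + X^{q^4+q} + X^{q^3+1} = 0. (In other words, the line ℓ_a(X) = aX^{q^2} − X^q − a^{q^2}X of the family Σ_A is totally isotropic for the elliptic quadratic form.) -/
/-- If `a : F` (with `card F = q^6`) satisfies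
`1 + a^(q^3+1) + a^(q^4+q) + a^(q^5+q^2) = 0`, then every `X` with
`a·X^(q^2) = X^q + a^(q^2)·X` satisfies `X^(q^5+q^2) + X^(q^4+q) + X^(q^3+1) = 0`. -/
theorem stmt_1 (q : ℕ) (hq : IsPrimePow q) (F : Type*) [Field F] [Fintype F]
    (hF : Fintype.card F = q ^ 6) (a : F)
    (ha : 1 + a ^ (q ^ 3 + 1) + a ^ (q ^ 4 + q) + a ^ (q ^ 5 + q ^ 2) = 0) :
    ∀ X : F, a * X ^ (q ^ 2) = X ^ q + a ^ (q ^ 2) * X →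
      X ^ (q ^ 5 + q ^ 2) + X ^ (q ^ 4 + q) + X ^ (q ^ 3 + 1) = 0 := by
  intro X L0
  -- identify the characteristic
  obtain ⟨p, h, hp, hh, hq'⟩ := hq
  have hpn : p.Prime := hp.nat_prime
  have hrp : (ringChar F).Prime := CharP.char_is_prime F _
  obtain ⟨n, -, hn⟩ := FiniteField.card F (ringChar F)
  have hcard : (ringChar F) ^ (n : ℕ) = p ^ (h * 6) := by
    rw [← hn, hF, ← hq', ← pow_mul]
  have hre : ringChar F = p := by
    have hdvd : ringChar F ∣ p ^ (h * 6) := hcard ▸ dvd_pow_self _ n.pos.ne'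
    exact (Nat.prime_dvd_prime_iff_eq hrp hpn).mp (hrp.dvd_of_dvd_pow hdvd)
  haveI : CharP F p := hre ▸ ringChar.charP F
  haveI : Fact p.Prime := ⟨hpn⟩
  -- Frobenius x ↦ x^q is additive
  have frq : ∀ x y : F, (x + y) ^ q = x ^ q + y ^ q := by
    intro x y; rw [← hq']; exact add_pow_char_pow (R := F) (p := p) (n := h) (x := x) (y := y)
  have pp : ∀ (x : F) (i : ℕ), (x ^ q ^ i) ^ q = x ^ q ^ (i + 1) := by
    intro x i; rw [← pow_mul, ← pow_succ]
  -- iterated Frobenius images of the relation L0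
  have key : ∀ i : ℕ, a ^ q ^ i * X ^ q ^ (i + 2) = X ^ q ^ (i + 1) + a ^ q ^ (i + 2) * X ^ q ^ i := by
    intro i
    induction i with
    | zero => simpa using L0
    | succ i ih =>
      have h1 := congrArg (· ^ q) ih
      simp only [mul_pow, frq, pp] at h1
      have e1 : i + 2 + 1 = i + 1 + 2 := by omega
      rwa [e1] at h1
  -- wrap-around: X^(q^6) = X, a^(q^6) = a
  have hX6 : X ^ q ^ 6 = X := by rw [← hF]; exact FiniteField.pow_card X
  have ha6 : a ^ q ^ 6 = a := by rw [← hF]; exact FiniteField.pow_card a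
  have hX7 : X ^ q ^ 7 = X ^ q := by
    have := pp X 6; rw [hX6] at this; rw [← this]
  have ha7 : a ^ q ^ 7 = a ^ q := by
    have := pp a 6; rw [ha6] at this; rw [← this]
  have L1 := key 1
  have L3 := key 3
  have L5 := key 5
  norm_num at L1 L3 L5
  rw [hX7, hX6, ha7] at L5
  -- L5 : a ^ q ^ 5 * X ^ q = X + a ^ q * X ^ q ^ 5
  linear_combination (-(X ^ q ^ 3)) * L5 + (-(X ^ q ^ 5)) * L1 + (-(X ^ q)) * L3
end

section
/- Let q be a prime power, let F be a finite field with q^6 elements, and let α ∈ F satisfy α^{q^3+1} = 1 (so α ≠ 0). Then for all x, a ∈ F, one has a·x^{q+1} − x + a^{q^2} = 0 if and only if (α^{-q}·a)·(α·x)^{q+1} − α·x + (α^{-q}·a)^{q^2} = 0, where α^{-q} denotes (α^q)^{-1}. -/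
/-- For `F` with `q^6` elements and `α` with `α^(q^3+1) = 1`, for all `x a : F`:
`a·x^(q+1) − x + a^(q^2) = 0` iff `(α^{-q}a)·(αx)^(q+1) − αx + (α^{-q}a)^(q^2) = 0`. -/
theorem stmt_2 (q : ℕ) (hq : IsPrimePow q) (F : Type*) [Field F] [Fintype F]
    (hF : Fintype.card F = q ^ 6) (α : F) (hα : α ^ (q ^ 3 + 1) = 1) :
    ∀ x a : F,
      a * x ^ (q + 1) - x + a ^ (q ^ 2) = 0 ↔
        ((α ^ q)⁻¹ * a) * (α * x) ^ (q + 1) - α * x + ((α ^ q)⁻¹ * a) ^ (q ^ 2) = 0 := by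
  have hα0 : α ≠ 0 := by
    intro h
    rw [h, zero_pow (by positivity)] at hα
    exact zero_ne_one hα
  have hq0 : (α ^ q) ≠ 0 := pow_ne_zero _ hα0
  have key : α ^ (q ^ 3) = α⁻¹ := by
    have h1 : α ^ (q ^ 3) * α = 1 := by rw [← pow_succ]; exact hα
    field_simp at h1 ⊢
    linear_combination h1
  intro x a
  have hE : ((α ^ q)⁻¹ * a) * (α * x) ^ (q + 1) - α * x + ((α ^ q)⁻¹ * a) ^ (q ^ 2)
      = α * (a * x ^ (q + 1) - x + a ^ (q ^ 2)) := by
    have h1 : (α * x) ^ (q + 1) = α ^ q * α * x ^ (q + 1) := by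
      rw [mul_pow, pow_succ]
    have h2 : ((α ^ q)⁻¹ * a) ^ (q ^ 2) = α * a ^ (q ^ 2) := by
      rw [mul_pow, ← inv_pow, ← pow_mul]
      have : q * q ^ 2 = q ^ 3 := by ring
      rw [this, inv_pow, key, inv_inv]
    rw [h1, h2]
    field_simp
  rw [hE, mul_eq_zero]
  simp [hα0]
end

section
/- Let q be a prime power, let F be a finite field with q^6 elements, and let c ∈ F satisfy c^{q^3+1} + c^{q^2−q+1} + 1 = 0. Then every X ∈ F satisfying X^{q^2} = c·X also satisfies X^{q^5+q^2} + X^{q^4+q} + X^{q^3+1} = 0. (In other words, the spread line ℓ_c(X) = X^{q^2} − cX is totally isotropic for the elliptic quadratic form.) -/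
/-- If `c : F` (with `card F = q^6`) satisfies
`c^(q^3+1) + c^(q^2−q+1) + 1 = 0`, then every `X` with `X^(q^2) = c·X` satisfies
`X^(q^5+q^2) + X^(q^4+q) + X^(q^3+1) = 0`. -/
theorem stmt_3 (q : ℕ) (hq : IsPrimePow q) (F : Type*) [Field F] [Fintype F]
    (hF : Fintype.card F = q ^ 6) (c : F)
    (hc : c ^ (q ^ 3 + 1) + c ^ (q ^ 2 - q + 1) + 1 = 0) :
    ∀ X : F, X ^ (q ^ 2) = c * X →
      X ^ (q ^ 5 + q ^ 2) + X ^ (q ^ 4 + q) + X ^ (q ^ 3 + 1) = 0 := by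
  intro X h
  have hle : q ≤ q ^ 2 := Nat.le_self_pow (by norm_num) q
  -- powers of X
  have h3 : X ^ (q ^ 3) = c ^ q * X ^ q := by
    have e : X ^ (q ^ 3) = (X ^ (q ^ 2)) ^ q := by rw [← pow_mul]; ring_nf
    rw [e, h, mul_pow]
  have h4 : X ^ (q ^ 4) = c ^ (q ^ 2) * (c * X) := by
    have e : X ^ (q ^ 4) = (X ^ (q ^ 2)) ^ (q ^ 2) := by rw [← pow_mul]; ring_nf
    rw [e, h, mul_pow, h]
  have h5 : X ^ (q ^ 5) = c ^ (q ^ 3) * (c ^ q * X ^ q) := by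
    have e : X ^ (q ^ 5) = (X ^ (q ^ 4)) ^ q := by rw [← pow_mul]; ring_nf
    rw [e, h4, mul_pow, mul_pow, ← pow_mul]
    have e2 : q ^ 2 * q = q ^ 3 := by ring
    rw [e2]
  -- key identity on c
  have k2 : c ^ (q ^ 2 - q + 1) * c ^ q = c ^ (q ^ 2 + 1) := by
    rw [← pow_add]; congr 1; omega
  have k3 : c ^ (q ^ 3 + 1) * c ^ q = c ^ (q ^ 3 + q + 1) := by
    rw [← pow_add]; congr 1; ring
  have key : c ^ (q ^ 3 + q + 1) + c ^ (q ^ 2 + 1) + c ^ q = 0 := by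
    have := congrArg (· * c ^ q) hc
    simpa only [add_mul, one_mul, zero_mul, k2, k3] using this
  rw [pow_add, pow_add, pow_add, pow_one, h5, h4, h3, h]
  calc c ^ (q ^ 3) * (c ^ q * X ^ q) * (c * X) + c ^ (q ^ 2) * (c * X) * X ^ q
        + c ^ q * X ^ q * X
      = (X ^ q * X) * (c ^ (q ^ 3) * c ^ q * c + c ^ (q ^ 2) * c + c ^ q) := by ring
    _ = (X ^ q * X) * (c ^ (q ^ 3 + q + 1) + c ^ (q ^ 2 + 1) + c ^ q) := by
        simp only [pow_add, pow_one]
    _ = 0 := by rw [key, mul_zero]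
end

section
/- Let q be a prime power, let F be a finite field with q^4 elements, let γ ∈ F be nonzero with γ^{q^2} = −γ, and let a ∈ F satisfy γ^{1−q}·a^{q^3+q} − γ^{q−1}·a^{q^2+1} + 1 = 0, where γ^{1−q} = γ·(γ^q)^{-1} and γ^{q−1} = γ^q·γ^{-1}. Set L = a·X^{q^2} + X^q − γ^{1−q}·a^q·X in the polynomial ring F[X]. Then the polynomial identity a^{q+1}·L^{q^2} − a·L^q + γ^{q−1}·a^{q^2+1}·L = a^{q^2+q+1}·(X^{q^4} − X) holds in F[X]. -/
open Polynomial

/-- For `F` with `q^4` elements, nonzero `γ` with `γ^(q^2) = −γ`, and `a`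
satisfying `γ^{1−q}·a^(q^3+q) − γ^{q−1}·a^(q^2+1) + 1 = 0`, setting
`L = a·X^(q^2) + X^q − γ^{1−q}·a^q·X` in `F[X]`, one has the polynomial identity
`a^(q+1)·L^(q^2) − a·L^q + γ^{q−1}·a^(q^2+1)·L = a^(q^2+q+1)·(X^(q^4) − X)`. -/
theorem stmt_5 (q : ℕ) (hq : IsPrimePow q) (F : Type*) [Field F] [Fintype F]
    (hF : Fintype.card F = q ^ 4) (γ : F) (hγ0 : γ ≠ 0) (hγ : γ ^ (q ^ 2) = -γ) (a : F)
    (ha : γ * (γ ^ q)⁻¹ * a ^ (q ^ 3 + q) - γ ^ q * γ⁻¹ * a ^ (q ^ 2 + 1) + 1 = 0)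
    (L : F[X])
    (hL : L = C a * X ^ (q ^ 2) + X ^ q - C (γ * (γ ^ q)⁻¹ * a ^ q) * X) :
    C (a ^ (q + 1)) * L ^ (q ^ 2) - C a * L ^ q
        + C (γ ^ q * γ⁻¹ * a ^ (q ^ 2 + 1)) * L =
      C (a ^ (q ^ 2 + q + 1)) * (X ^ (q ^ 4) - X) := by
  obtain ⟨p, k, hp, hk, rfl⟩ := hq
  have hpp : p.Prime := Nat.prime_iff.mpr hp
  haveI : Fact p.Prime := ⟨hpp⟩
  -- characteristic
  have hcharF : CharP F p := by
    haveI : CharP F (ringChar F) := ringChar.charP F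
    have hr : (ringChar F).Prime := CharP.char_is_prime F (ringChar F)
    obtain ⟨n, -, hcard⟩ := FiniteField.card F (ringChar F)
    have hdvd : ringChar F ∣ p := by
      have h1 : ringChar F ∣ (p ^ k) ^ 4 := by
        rw [← hF, hcard]
        exact dvd_pow_self _ n.ne_zero
      exact hr.dvd_of_dvd_pow (hr.dvd_of_dvd_pow h1)
    have : ringChar F = p := (Nat.prime_dvd_prime_iff_eq hr hpp).mp hdvd
    rwa [this] at ‹CharP F (ringChar F)›
  haveI := hcharF
  haveI : CharP F[X] p := Polynomial.instCharP p
  set c : F := γ * (γ ^ (p ^ k))⁻¹ * a ^ (p ^ k) with hc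
  set d : F := γ ^ (p ^ k) * γ⁻¹ * a ^ ((p ^ k) ^ 2 + 1) with hd
  have hγq : γ ^ (p ^ k) ≠ 0 := pow_ne_zero _ hγ0
  have hnegpow : ∀ x : F, (-x) ^ (p ^ k) = -(x ^ (p ^ k)) := by
    intro x
    rw [neg_eq_neg_one_mul, mul_pow, neg_one_pow_char_pow, neg_one_mul]
  have hsq : ∀ x : F, x ^ ((p ^ k) ^ 2) = (x ^ (p ^ k)) ^ (p ^ k) := by
    intro x; rw [pow_two, pow_mul]
  have hcube : ∀ x : F, x ^ ((p ^ k) ^ 3) = (x ^ ((p ^ k) ^ 2)) ^ (p ^ k) := by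
    intro x; rw [show (3:ℕ) = 2 + 1 from rfl, pow_succ, pow_mul]
  have hγ2 : (γ ^ (p ^ k)) ^ (p ^ k) = -γ := by
    rw [← pow_mul, ← pow_two, hγ]
  -- Frobenius of c
  have hcq : c ^ (p ^ k) = -(γ ^ (p ^ k) * γ⁻¹ * a ^ ((p ^ k) ^ 2)) := by
    rw [hc, mul_pow, mul_pow, inv_pow, hγ2, hsq a, inv_neg]
    ring
  have hcq2 : c ^ ((p ^ k) ^ 2) = γ * (γ ^ (p ^ k))⁻¹ * a ^ ((p ^ k) ^ 3) := by
    rw [hsq c, hcq, hnegpow, mul_pow, mul_pow, hγ2, inv_pow, hcube a]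
    ring
  -- scalar coefficient identities
  have E1 : a ^ (p ^ k + 1) * a ^ ((p ^ k) ^ 2) = a ^ ((p ^ k) ^ 2 + p ^ k + 1) := by
    rw [← pow_add]; ring_nf
  have E2 : a ^ (p ^ k + 1) = a * a ^ (p ^ k) := by
    rw [pow_add, pow_one]; ring
  have E3 : a ^ (p ^ k + 1) * c ^ ((p ^ k) ^ 2) + a = d * a := by
    rw [hcq2]
    have hpa : a ^ ((p ^ k) ^ 3 + p ^ k) = a ^ ((p ^ k) ^ 3) * a ^ (p ^ k) :=
      pow_add a _ _
    linear_combination a * ha + (-(a * γ * (γ ^ (p ^ k))⁻¹)) * hpa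
  have E4 : a * c ^ (p ^ k) + d = 0 := by
    rw [hcq, hd]
    have hpa : a ^ ((p ^ k) ^ 2 + 1) = a ^ ((p ^ k) ^ 2) * a ^ 1 := pow_add a _ _
    linear_combination hpa
  have E5 : d * c = a ^ ((p ^ k) ^ 2 + p ^ k + 1) := by
    rw [hd, hc]
    have hpa : a ^ ((p ^ k) ^ 2 + 1) = a ^ ((p ^ k) ^ 2) * a ^ 1 := pow_add a _ _
    have hpb : a ^ ((p ^ k) ^ 2 + p ^ k + 1)
        = a ^ ((p ^ k) ^ 2) * a ^ (p ^ k) * a ^ 1 := by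
      rw [pow_add, pow_add]
    field_simp
    linear_combination (γ ^ (p ^ k) * γ) * hpb + (-(γ ^ (p ^ k) * γ)) * hpa * 0 +
      (γ ^ (p ^ k) * γ * a ^ (p ^ k)) * hpa
  -- Frobenius expansion of polynomials
  have hstep : ∀ (u v : F) (i j l : ℕ),
      ((C u * X ^ i + X ^ j - C v * X ^ l : F[X])) ^ (p ^ k)
        = C (u ^ (p ^ k)) * X ^ (i * p ^ k) + X ^ (j * p ^ k)
          - C (v ^ (p ^ k)) * X ^ (l * p ^ k) := by
    intro u v i j l
    rw [sub_pow_char_pow, add_pow_char_pow, mul_pow, mul_pow, ← C_pow, ← C_pow,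
      ← pow_mul, ← pow_mul, ← pow_mul]
  have hL1 : L = C a * X ^ ((p ^ k) ^ 2) + X ^ (p ^ k) - C c * X ^ 1 := by
    rw [hL, pow_one]
  have hLq : L ^ (p ^ k)
      = C (a ^ (p ^ k)) * X ^ ((p ^ k) ^ 2 * p ^ k) + X ^ (p ^ k * p ^ k)
        - C (c ^ (p ^ k)) * X ^ (1 * p ^ k) := by
    rw [hL1, hstep]
  have hLq2 : L ^ ((p ^ k) ^ 2)
      = C ((a ^ (p ^ k)) ^ (p ^ k)) * X ^ ((p ^ k) ^ 2 * p ^ k * p ^ k)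
        + X ^ (p ^ k * p ^ k * p ^ k)
        - C ((c ^ (p ^ k)) ^ (p ^ k)) * X ^ (1 * p ^ k * p ^ k) := by
    have h2 : L ^ ((p ^ k) ^ 2) = (L ^ (p ^ k)) ^ (p ^ k) := by rw [pow_two, pow_mul]
    rw [h2, hLq, hstep]
  have hca2 : (a ^ (p ^ k)) ^ (p ^ k) = a ^ ((p ^ k) ^ 2) := (hsq a).symm
  have hcc2 : (c ^ (p ^ k)) ^ (p ^ k) = c ^ ((p ^ k) ^ 2) := (hsq c).symm
  rw [hca2, hcc2] at hLq2
  -- polynomial-level coefficient identities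
  have hC1 : (C (a ^ (p ^ k + 1)) * C (a ^ ((p ^ k) ^ 2)) : F[X])
      = C (a ^ ((p ^ k) ^ 2 + p ^ k + 1)) := by rw [← C_mul, E1]
  have hC2 : (C (a ^ (p ^ k + 1)) : F[X]) = C a * C (a ^ (p ^ k)) := by
    rw [← C_mul, ← E2]
  have hC3 : (C (a ^ (p ^ k + 1)) * C (c ^ ((p ^ k) ^ 2)) + C a : F[X]) = C d * C a := by
    rw [← C_mul, ← C_mul, ← C_add]
    exact congrArg C E3
  have hC4 : (C a * C (c ^ (p ^ k)) + C d : F[X]) = 0 := by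
    rw [← C_mul, ← C_add, E4, C_0]
  have hC5 : (C d * C c : F[X]) = C (a ^ ((p ^ k) ^ 2 + p ^ k + 1)) := by
    rw [← C_mul, E5]
  rw [hLq2, hLq, hL1]
  linear_combination (X : F[X]) ^ ((p ^ k) ^ 4) * hC1 + (X : F[X]) ^ ((p ^ k) ^ 3) * hC2
    - (X : F[X]) ^ ((p ^ k) ^ 2) * hC3 + (X : F[X]) ^ (p ^ k) * hC4 - (X : F[X]) * hC5
end

section
/- Let q be a prime power, let F be a finite field with q^4 elements, let γ ∈ F be nonzero with γ^{q^2} = −γ, and let α ∈ F satisfy α^{q^2+1} = 1 (so α ≠ 0). Then for all x, a ∈ F, one has a·x^{q+1} + x − γ^{1−q}·a^q = 0 if and only if (α^{-q}·a)·(α·x)^{q+1} + α·x − γ^{1−q}·(α^{-q}·a)^q = 0, where α^{-q} = (α^q)^{-1} and γ^{1−q} = γ·(γ^q)^{-1}. -/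
/-- For `F` with `q^4` elements, nonzero `γ` with `γ^(q^2) = −γ`, and `α` with
`α^(q^2+1) = 1`, for all `x a : F`: `a·x^(q+1) + x − γ^{1−q}·a^q = 0` iff
`(α^{-q}a)·(αx)^(q+1) + αx − γ^{1−q}·(α^{-q}a)^q = 0`. -/
theorem stmt_7 (q : ℕ) (hq : IsPrimePow q) (F : Type*) [Field F] [Fintype F]
    (hF : Fintype.card F = q ^ 4) (γ : F) (hγ0 : γ ≠ 0) (hγ : γ ^ (q ^ 2) = -γ)
    (α : F) (hα : α ^ (q ^ 2 + 1) = 1) :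
    ∀ x a : F,
      a * x ^ (q + 1) + x - γ * (γ ^ q)⁻¹ * a ^ q = 0 ↔
        ((α ^ q)⁻¹ * a) * (α * x) ^ (q + 1) + α * x
            - γ * (γ ^ q)⁻¹ * ((α ^ q)⁻¹ * a) ^ q = 0 := by
  intro x a
  have hα0 : α ≠ 0 := by
    intro h
    rw [h, zero_pow (Nat.succ_ne_zero _)] at hα
    exact zero_ne_one hα
  have hαq0 : α ^ q ≠ 0 := pow_ne_zero _ hα0
  have hinv : α ^ (q ^ 2) = α⁻¹ := by
    apply eq_inv_of_mul_eq_one_left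
    rw [← pow_succ]
    exact hα
  have e2 : ((α ^ q)⁻¹ * a) ^ q = α * a ^ q := by
    rw [mul_pow, inv_pow, ← pow_mul, ← pow_two, hinv, inv_inv]
  have key : ((α ^ q)⁻¹ * a) * (α * x) ^ (q + 1) + α * x
      - γ * (γ ^ q)⁻¹ * ((α ^ q)⁻¹ * a) ^ q
      = α * (a * x ^ (q + 1) + x - γ * (γ ^ q)⁻¹ * a ^ q) := by
    rw [e2, mul_pow, pow_succ]
    field_simp
  rw [key]
  constructor
  · intro h; rw [h, mul_zero]
  · intro h
    rcases mul_eq_zero.mp h with h' | h'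
    · exact absurd h' hα0
    · exact h'
end

section
/- Let q be a prime power and let F be a finite field with q^{10} elements. For every nonzero X ∈ F, setting x = X^{q^2−1}, one has X^{q^5+1} + X^{q^7+q^2} + X^{q^9+q^4} + X^{q+q^6} + X^{q^3+q^8} = 0 if and only if 1 + x^{q^5+1} + x^{q^7+q^5+q^2+1} + x^{q^4−q^3+q^2−q+1} + x^{q^6+q^4−q^3+q^2+1} = 0. -/
/-- For `F` with `q^10` elements and nonzero `X : F`, setting `x = X^(q^2−1)`,
one has `X^(q^5+1) + X^(q^7+q^2) + X^(q^9+q^4) + X^(q+q^6) + X^(q^3+q^8) = 0` iff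
`1 + x^(q^5+1) + x^(q^7+q^5+q^2+1) + x^(q^4−q^3+q^2−q+1) + x^(q^6+q^4−q^3+q^2+1) = 0`. -/
theorem stmt_9 (q : ℕ) (hq : IsPrimePow q) (F : Type*) [Field F] [Fintype F]
    (hF : Fintype.card F = q ^ 10) (X : F) (hX : X ≠ 0) (x : F) (hx : x = X ^ (q ^ 2 - 1)) :
    X ^ (q ^ 5 + 1) + X ^ (q ^ 7 + q ^ 2) + X ^ (q ^ 9 + q ^ 4)
        + X ^ (q + q ^ 6) + X ^ (q ^ 3 + q ^ 8) = 0 ↔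
      1 + x ^ (q ^ 5 + 1) + x ^ (q ^ 7 + q ^ 5 + q ^ 2 + 1)
        + x ^ (q ^ 4 - q ^ 3 + q ^ 2 - q + 1)
        + x ^ (q ^ 6 + q ^ 4 - q ^ 3 + q ^ 2 + 1) = 0 := by
  have hq2 : 2 ≤ q := hq.two_le
  have h1 : 1 ≤ q ^ 2 := Nat.one_le_pow _ _ (by omega)
  have h2 : q ^ 3 ≤ q ^ 4 := Nat.pow_le_pow_right (by omega) (by omega)
  have hqq2 : q ≤ q ^ 2 := Nat.le_self_pow (by norm_num) q
  have h3 : q ≤ q ^ 4 - q ^ 3 + q ^ 2 := le_trans hqq2 (Nat.le_add_left _ _)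
  have e1 : q ^ 5 + 1 + (q ^ 2 - 1) * (q ^ 5 + 1) = q ^ 7 + q ^ 2 := by
    zify [h1]; ring
  have e2 : q ^ 5 + 1 + (q ^ 2 - 1) * (q ^ 7 + q ^ 5 + q ^ 2 + 1) = q ^ 9 + q ^ 4 := by
    zify [h1]; ring
  have e3 : q ^ 5 + 1 + (q ^ 2 - 1) * (q ^ 4 - q ^ 3 + q ^ 2 - q + 1) = q + q ^ 6 := by
    zify [h1, h2, h3]; ring
  have e4 : q ^ 5 + 1 + (q ^ 2 - 1) * (q ^ 6 + q ^ 4 - q ^ 3 + q ^ 2 + 1) = q ^ 3 + q ^ 8 := by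
    have h2' : q ^ 3 ≤ q ^ 6 + q ^ 4 := le_trans h2 (Nat.le_add_left _ _)
    zify [h1, h2']; ring
  subst hx
  have key : X ^ (q ^ 5 + 1) + X ^ (q ^ 7 + q ^ 2) + X ^ (q ^ 9 + q ^ 4)
        + X ^ (q + q ^ 6) + X ^ (q ^ 3 + q ^ 8)
      = X ^ (q ^ 5 + 1) * (1 + (X ^ (q ^ 2 - 1)) ^ (q ^ 5 + 1)
        + (X ^ (q ^ 2 - 1)) ^ (q ^ 7 + q ^ 5 + q ^ 2 + 1)
        + (X ^ (q ^ 2 - 1)) ^ (q ^ 4 - q ^ 3 + q ^ 2 - q + 1)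
        + (X ^ (q ^ 2 - 1)) ^ (q ^ 6 + q ^ 4 - q ^ 3 + q ^ 2 + 1)) := by
    rw [← pow_mul, ← pow_mul, ← pow_mul, ← pow_mul, mul_add, mul_add, mul_add, mul_add,
      mul_one, ← pow_add, ← pow_add, ← pow_add, ← pow_add, e1, e2, e3, e4]
  rw [key, mul_eq_zero, or_iff_right (pow_ne_zero _ hX)]
end

section
/- Let q be a prime power and let F be a finite field with q^{10} elements. If c ∈ F satisfies Δ(c) = (1+c)^{q^2+1} + c^q = 0, then Ω(c) = (1+c)^{q^4+1} + c^{q^4−q^2+1} = 0. -/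
/-- Lyness-type algebraic step in a field. -/
lemma lyness_step {K : Type*} [Field K] (x y z w v : K) (hx : x ≠ 0) (hz : z ≠ 0)
    (h1 : z * x = 1 - y) (h2 : w * y = 1 - z) (h3 : v * z = 1 - w) :
    v * y = 1 - x := by
  have hy1 : (1 : K) - y ≠ 0 := h1 ▸ mul_ne_zero hz hx
  have key : (1 - y) * (v * y - (1 - x)) = 0 := by
    linear_combination (1 - v * y) * h1 - x * h2 + x * y * h3
  have h := (mul_eq_zero.mp key).resolve_left hy1
  linear_combination h

/-- For `F` with `q^10` elements, if `Δ(c) = (1+c)^(q^2+1) + c^q = 0` then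
`Ω(c) = (1+c)^(q^4+1) + c^(q^4−q^2+1) = 0`. -/
theorem stmt_10 (q : ℕ) (hq : IsPrimePow q) (F : Type*) [Field F] [Fintype F]
    (hF : Fintype.card F = q ^ 10) (c : F)
    (hΔ : (1 + c) ^ (q ^ 2 + 1) + c ^ q = 0) :
    (1 + c) ^ (q ^ 4 + 1) + c ^ (q ^ 4 - q ^ 2 + 1) = 0 := by
  obtain ⟨p, k, hp, hk, rfl⟩ := hq
  rw [Nat.prime_iff.symm] at hp
  -- characteristic of F is p
  obtain ⟨n, hrp, hcard⟩ := FiniteField.card F (ringChar F)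
  have hpq : ringChar F = p := by
    have hdvd : ringChar F ∣ p ^ (k * 10) := by
      rw [pow_mul, ← hF, hcard]
      exact dvd_pow_self _ n.pos.ne'
    exact (Nat.prime_dvd_prime_iff_eq hrp hp).mp (hrp.dvd_of_dvd_pow hdvd)
  haveI : Fact p.Prime := ⟨hp⟩
  haveI : CharP F p := hpq ▸ ringChar.charP F
  have hq0 : 0 < p ^ k := pow_pos hp.pos k
  -- Frobenius-type lemmas for powers of q
  have hadd : ∀ (m : ℕ) (x y : F), (x + y) ^ (p ^ k) ^ m = x ^ (p ^ k) ^ m + y ^ (p ^ k) ^ m := by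
    intro m x y
    rw [← pow_mul]
    exact add_pow_char_pow x y p (k * m)
  have hsub : ∀ (m : ℕ) (x y : F), (x - y) ^ (p ^ k) ^ m = x ^ (p ^ k) ^ m - y ^ (p ^ k) ^ m := by
    intro m x y
    have h := hadd m (x - y) y
    rw [sub_add_cancel] at h
    linear_combination -h
  set q := p ^ k with hqdef
  -- basic nonvanishing
  have hc0 : c ≠ 0 := by
    rintro rfl
    simp [zero_pow hq0.ne'] at hΔ
  set a : F := 1 + c with ha
  have ha0 : a ≠ 0 := by
    intro h
    rw [h, zero_pow (Nat.succ_ne_zero _), zero_add] at hΔ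
    exact hc0 ((pow_eq_zero_iff hq0.ne').mp hΔ)
  -- c = a - 1
  have hca : c = a - 1 := by rw [ha]; ring
  -- the basic relation : a^(q^2) * a = 1 - a^q
  have hrel : a ^ (q ^ 2) * a = 1 - a ^ q := by
    have h1 : c ^ q = a ^ q - 1 := by
      rw [hca]
      have := hsub 1 a 1
      simpa [pow_one] using this
    have h2 : a ^ (q ^ 2 + 1) = a ^ (q ^ 2) * a := pow_succ a (q ^ 2)
    have h3 : a ^ (q ^ 2) * a + (a ^ q - 1) = 0 := by rw [← h1, ← h2]; exact hΔ
    linear_combination h3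
  -- Frobenius twists of the relation
  have epow : ∀ i j : ℕ, (a ^ q ^ i) ^ q ^ j = a ^ q ^ (i + j) := by
    intro i j
    rw [← pow_mul, ← pow_add]
  have htwist : ∀ m : ℕ, a ^ (q ^ (m + 2)) * a ^ (q ^ m) = 1 - a ^ (q ^ (m + 1)) := by
    intro m
    have e1 : a ^ q ^ (m + 2) = (a ^ q ^ 2) ^ q ^ m := by
      rw [epow 2 m, Nat.add_comm 2 m]
    have e2 : a ^ q ^ (m + 1) = (a ^ q) ^ q ^ m := by
      have := epow 1 m
      rw [pow_one] at this
      rw [this, Nat.add_comm 1 m]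
    rw [e1, e2, ← mul_pow, hrel, hsub m 1 (a ^ q), one_pow]
  set u0 : F := a with hu0
  set u1 : F := a ^ q with hu1
  set u2 : F := a ^ (q ^ 2) with hu2
  set u3 : F := a ^ (q ^ 3) with hu3
  set u4 : F := a ^ (q ^ 4) with hu4
  have h1 : u2 * u0 = 1 - u1 := by
    have := htwist 0
    simpa [pow_zero, pow_one] using this
  have h2 : u3 * u1 = 1 - u2 := by
    have := htwist 1
    simpa [pow_one] using this
  have h3 : u4 * u2 = 1 - u3 := htwist 2
  have hu0' : u0 ≠ 0 := ha0
  have hu1' : u1 ≠ 0 := pow_ne_zero _ ha0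
  have hu2' : u2 ≠ 0 := pow_ne_zero _ ha0
  have hu4' : u4 ≠ 0 := pow_ne_zero _ ha0
  -- reversed Lyness step : u0 * u3 = 1 - u4
  have key : u0 * u3 = 1 - u4 :=
    lyness_step u4 u3 u2 u1 u0 hu4' hu2' (by linear_combination h3)
      (by linear_combination h2) (by linear_combination h1)
  -- c^(q^2) and c^(q^4)
  have hc2 : c ^ (q ^ 2) = u2 - 1 := by
    rw [hca]
    have := hsub 2 a 1
    simpa using this
  have hc4 : c ^ (q ^ 4) = u4 - 1 := by
    rw [hca]
    have := hsub 4 a 1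
    simpa using this
  have hc2' : c ^ (q ^ 2) ≠ 0 := pow_ne_zero _ hc0
  -- multiply the goal by c^(q^2)
  have hmain : ((1 + c) ^ (q ^ 4 + 1) + c ^ (q ^ 4 - q ^ 2 + 1)) * c ^ (q ^ 2) = 0 := by
    have hle : q ^ 2 ≤ q ^ 4 := Nat.pow_le_pow_right hq0 (by norm_num)
    have hexp : q ^ 4 - q ^ 2 + 1 + q ^ 2 = q ^ 4 + 1 := by omega
    rw [add_mul, ← pow_add, hexp]
    have e1 : (1 + c) ^ (q ^ 4 + 1) = u4 * u0 := by
      rw [← ha]; exact pow_succ a (q ^ 4)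
    have e2 : c ^ (q ^ 4 + 1) = (u4 - 1) * (u0 - 1) := by
      rw [pow_succ c (q ^ 4), hc4, hca]
    rw [e1, e2, hc2]
    linear_combination u0 * h3 - key
  rcases mul_eq_zero.mp hmain with h | h
  · exact h
  · exact absurd h hc2'
end

section
/- Let q be a prime power and let F be a finite field with q^{10} elements. The set {c ∈ F : (1+c)^{q^2+1} + c^q = 0} has exactly q^2+1 elements, and every element c of this set satisfies c^{q^5} = c (i.e. all roots of Δ lie in the subfield of F with q^5 elements). -/
open Polynomial

-- the Lyness identity
lemma lyness_id {R : Type*} [CommRing R] (x0 x1 x2 x3 x4 x5 : R) :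
    (1+x2)*(1+x3)*(x5 - x0) =
      (1+x2)*((1+x3)*(1+x5)+x4) - ((1+x2)*(1+x4)+x3)
        + ((1+x1)*(1+x3)+x2) - (1+x3)*((1+x0)*(1+x2)+x1) := by ring

-- key divisibility lemma
lemma key_dvd (q : ℕ) (hq : IsPrimePow q) (F : Type*) [Field F] [Fintype F]
    (hF : Fintype.card F = q ^ 10) :
    ((1 + X : F[X]) ^ (q ^ 2 + 1) + X ^ q) ∣ (X ^ q ^ 5 - X) := by
  obtain ⟨p, k, hp, hk, hq'⟩ := hq
  have hpp : p.Prime := hp.nat_prime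
  haveI := Fact.mk hpp
  -- char of F is p
  have hcharF : CharP F p := by
    set p' := ringChar F with hp'
    haveI : CharP F p' := ringChar.charP F
    have hp'p : p'.Prime := CharP.char_is_prime F p'
    obtain ⟨n, hn⟩ := FiniteField.card F p'
    have : p ∣ p' := by
      have h1 : p ∣ p' ^ (n : ℕ) := by
        rw [← hn.2, hF, ← hq', ← pow_mul]
        exact dvd_pow_self p (by positivity)
      exact hpp.dvd_of_dvd_pow h1
    have : p = p' := ((Nat.prime_dvd_prime_iff_eq hpp hp'p).mp this)
    rw [this]; infer_instance
  haveI : CharP F[X] p := charP_of_injective_ringHom (Polynomial.C_injective) p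
  have hfrob : ∀ (a b : F[X]) (i : ℕ), (a+b)^(q^i) = a^(q^i) + b^(q^i) := by
    intro a b i
    rw [← hq', ← pow_mul, add_pow_char_pow]
  set D : F[X] := (1 + X) ^ (q ^ 2 + 1) + X ^ q with hD
  -- D in factored form
  have h1 : D = (1 + X ^ q ^ 2) * (1 + X) + X ^ q := by
    rw [hD, pow_succ, ← one_pow (q^2) (M := F[X]), ← hfrob 1 X 2, one_pow]
  -- Frobenius twists
  have hΔ : ∀ i : ℕ, D ^ q ^ i = (1 + X ^ q ^ i) * (1 + X ^ q ^ (i + 2)) + X ^ q ^ (i+1) := by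
    intro i
    have e1 : q ^ 2 * q ^ i = q ^ (i + 2) := by rw [← pow_add]; ring_nf
    have e2 : q * q ^ i = q ^ (i + 1) := by rw [pow_succ, mul_comm]
    rw [h1, hfrob, mul_pow, hfrob, hfrob, one_pow, ← pow_mul, ← pow_mul, e1, e2]
    ring
  have hqpos : 0 < q := by rw [← hq']; exact pow_pos hpp.pos k
  have hq0 : q ≠ 0 := hqpos.ne'
  have hdvd1 : D ∣ (1 + X ^ q ^ 2) * (1 + X ^ q ^ 3) * (X ^ q ^ 5 - X) := by
    have key : (1 + X ^ q ^ 2) * (1 + X ^ q ^ 3) * (X ^ q ^ 5 - X) =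
        (1 + X ^ q ^ 2) * (D ^ q ^ 3) - D ^ q ^ 2 + D ^ q ^ 1 - (1 + X ^ q ^ 3) * D := by
      rw [hΔ 3, hΔ 2, hΔ 1, h1]
      have := lyness_id (X : F[X]) (X ^ q ^ 1) (X ^ q ^ 2) (X ^ q ^ 3) (X ^ q ^ 4) (X ^ q ^ 5)
      norm_num at this ⊢
      linear_combination this
    rw [key]
    have hd : ∀ i : ℕ, 0 < i → D ∣ D ^ q ^ i := fun i _ =>
      dvd_pow_self D (pow_ne_zero i hq0)
    exact dvd_sub (dvd_add (dvd_sub ((hd 3 (by norm_num)).mul_left _) (hd 2 (by norm_num)))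
      (hd 1 (by norm_num))) (Dvd.intro_left _ rfl)
  -- coprimality with 1 + X
  have hroot : ¬ D.IsRoot (-1) := by
    simp only [IsRoot.def, hD, eval_add, eval_pow, eval_one, eval_X]
    have h0 : (1 : F) + (-1) = 0 := by ring
    rw [h0, zero_pow (by positivity), zero_add]
    exact pow_ne_zero _ (neg_ne_zero.mpr one_ne_zero)
  have hXC : (X - C (-1 : F) : F[X]) = 1 + X := by
    rw [map_neg, C_1, sub_neg_eq_add, add_comm]
  have hco : IsCoprime ((1 : F[X]) + X) D := by
    rw [← hXC]
    exact (Polynomial.irreducible_X_sub_C (-1 : F)).coprime_iff_not_dvd.mpr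
      (fun hdvd => hroot ((Polynomial.dvd_iff_isRoot).mp hdvd))
  have hpow2 : ((1 : F[X]) + X) ^ q ^ 2 = 1 + X ^ q ^ 2 := by rw [hfrob, one_pow]
  have hpow3 : ((1 : F[X]) + X) ^ q ^ 3 = 1 + X ^ q ^ 3 := by rw [hfrob, one_pow]
  have hcop : IsCoprime D ((1 + X ^ q ^ 2) * (1 + X ^ q ^ 3) : F[X]) := by
    rw [← hpow2, ← hpow3]
    exact ((hco.pow_left.mul_left hco.pow_left)).symm
  exact hcop.dvd_of_dvd_mul_left hdvd1

/-- For `F` with `q^10` elements, the set `{c : F | (1+c)^(q^2+1) + c^q = 0}`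
has exactly `q^2 + 1` elements, and every element `c` of it satisfies `c^(q^5) = c`. -/
theorem stmt_11 (q : ℕ) (hq : IsPrimePow q) (F : Type*) [Field F] [Fintype F]
    (hF : Fintype.card F = q ^ 10) :
    {c : F | (1 + c) ^ (q ^ 2 + 1) + c ^ q = 0}.ncard = q ^ 2 + 1 ∧
      ∀ c : F, (1 + c) ^ (q ^ 2 + 1) + c ^ q = 0 → c ^ (q ^ 5) = c := by
  classical
  have hq1 : 1 < q := hq.one_lt
  set D : F[X] := (1 + X) ^ (q ^ 2 + 1) + X ^ q with hD
  have hdvd : D ∣ (X ^ q ^ 5 - X) := key_dvd q hq F hF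
  have hdvd2 : (X ^ q ^ 5 - X : F[X]) ∣ X ^ Fintype.card F - X := by
    rw [hF]
    have h1 : (X ^ q ^ 5 - X : F[X]) ∣ (X ^ q ^ 5) ^ q ^ 5 - X ^ q ^ 5 :=
      sub_dvd_pow_sub_pow _ _ _
    have h2 : ((X : F[X]) ^ q ^ 5) ^ q ^ 5 = X ^ q ^ 10 := by
      rw [← pow_mul, ← pow_add]
    have h3 : (X ^ q ^ 10 - X : F[X]) =
        ((X ^ q ^ 5) ^ q ^ 5 - X ^ q ^ 5) + (X ^ q ^ 5 - X) := by rw [h2]; ring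
    rw [h3]
    exact dvd_add h1 dvd_rfl
  have hbigne : (X ^ Fintype.card F - X : F[X]) ≠ 0 :=
    FiniteField.X_pow_card_sub_X_ne_zero F Fintype.one_lt_card
  have hroots : (X ^ Fintype.card F - X : F[X]).roots = Finset.univ.val :=
    FiniteField.roots_X_pow_card_sub_X F
  have hbigsplits : Splits (X ^ Fintype.card F - X : F[X]) := by
    rw [splits_iff_card_roots, hroots,
      FiniteField.X_pow_card_sub_X_natDegree_eq F Fintype.one_lt_card]
    simp [Finset.card_univ]
  have hDdvdbig : D ∣ (X ^ Fintype.card F - X : F[X]) := hdvd.trans hdvd2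
  have hDne : D ≠ 0 := ne_zero_of_dvd_ne_zero hbigne hDdvdbig
  have hDsplits : Splits D :=
    Splits.of_dvd hbigsplits hbigne hDdvdbig
  have hDnodup : D.roots.Nodup := by
    have hle := Polynomial.roots.le_of_dvd hbigne hDdvdbig
    rw [hroots] at hle
    exact Multiset.nodup_of_le hle Finset.univ.nodup
  have hm : ((1 : F[X]) + X).Monic := by
    rw [add_comm, ← C_1]; exact monic_X_add_C (1 : F)
  have hdeg1 : ((1 : F[X]) + X).degree = 1 := by
    rw [add_comm, ← C_1]; exact degree_X_add_C (1 : F)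
  have hdegpow : (((1 : F[X]) + X) ^ (q ^ 2 + 1)).degree = ((q ^ 2 + 1 : ℕ) : WithBot ℕ) := by
    rw [degree_pow, hdeg1]
    simp
  have hdlt : (X ^ q : F[X]).degree < (((1 : F[X]) + X) ^ (q ^ 2 + 1)).degree := by
    rw [degree_X_pow, hdegpow]
    exact_mod_cast Nat.lt_succ_of_le (le_trans (Nat.le_refl q)
      (by nlinarith : q ≤ q ^ 2))
  have hDdeg : D.degree = ((q ^ 2 + 1 : ℕ) : WithBot ℕ) := by
    rw [hD, degree_add_eq_left_of_degree_lt hdlt, hdegpow]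
  have hDnat : D.natDegree = q ^ 2 + 1 := natDegree_eq_of_degree_eq_some hDdeg
  have hcard : Multiset.card D.roots = q ^ 2 + 1 := by
    rw [← hDnat]
    exact (splits_iff_card_roots.mp hDsplits)
  have heval : ∀ c : F, D.eval c = (1 + c) ^ (q ^ 2 + 1) + c ^ q := by
    intro c; simp [hD]
  constructor
  · have hset : {c : F | (1 + c) ^ (q ^ 2 + 1) + c ^ q = 0} = ↑D.roots.toFinset := by
      ext c
      simp only [Set.mem_setOf_eq, Finset.coe_sort_coe, Multiset.mem_toFinset,
        Finset.mem_coe, mem_roots hDne, IsRoot.def, heval c]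
    rw [hset, Set.ncard_coe_finset, Multiset.toFinset_card_of_nodup hDnodup, hcard]
  · intro c hc
    obtain ⟨E, hE⟩ := hdvd
    have h := congrArg (eval c) hE
    rw [eval_mul, eval_sub, eval_pow, eval_X] at h
    rw [show D.eval c = 0 by rw [heval c, hc], zero_mul] at h
    exact sub_eq_zero.mp h
end

section
/- Let q be a prime power and let K be a finite field with q elements. In the polynomial ring K[C], set f = C^{q^2+1} + (C−1)^q. Then the polynomial C^{q^5} − C divides C^{q^2+q}·f^{q^3} − C^q·f^{q^2} + (1 − C^{q^2+1})·f^q + (C^{q^2} − 1)·f. -/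
open Polynomial

/-- For `K` a finite field with `q` elements, setting
`f = C^(q^2+1) + (C−1)^q` in `K[C]`, the polynomial `C^(q^5) − C` divides
`C^(q^2+q)·f^(q^3) − C^q·f^(q^2) + (1 − C^(q^2+1))·f^q + (C^(q^2) − 1)·f`. -/
theorem stmt_12 (q : ℕ) (hq : IsPrimePow q) (K : Type*) [Field K] [Fintype K]
    (hK : Fintype.card K = q) (f : K[X]) (hf : f = X ^ (q ^ 2 + 1) + (X - 1) ^ q) :
    (X ^ (q ^ 5) - X) ∣
      (X ^ (q ^ 2 + q) * f ^ (q ^ 3) - X ^ q * f ^ (q ^ 2)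
        + (1 - X ^ (q ^ 2 + 1)) * f ^ q + (X ^ (q ^ 2) - 1) * f) := by
  obtain ⟨p, hchar⟩ := CharP.exists K
  haveI := hchar
  have hp : p.Prime := CharP.char_is_prime K p
  haveI := Fact.mk hp
  obtain ⟨n, hcard⟩ := FiniteField.card K p
  have hqe : q = p ^ (n : ℕ) := by rw [← hK, hcard.2]
  have key : ∀ k : ℕ, f ^ q ^ k
      = X ^ ((q ^ 2 + 1) * q ^ k) + (X ^ (q * q ^ k) - 1) := by
    intro k
    have e1 : q ^ k = p ^ (n * k) := by rw [hqe, ← pow_mul]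
    have e2 : q * q ^ k = p ^ (n * (k + 1)) := by
      rw [hqe, ← pow_succ', ← pow_mul, Nat.mul_add, Nat.mul_one, Nat.add_comm]
    rw [hf, e1, add_pow_char_pow, ← e1, ← pow_mul, ← pow_mul, e2,
      sub_pow_char_pow, one_pow, ← e2]
  have h3 := key 3
  have h2 := key 2
  have h1 := key 1
  have h0 := key 0
  rw [pow_zero, pow_one, mul_one, mul_one] at h0
  rw [pow_one] at h1
  refine ⟨X ^ (q + q ^ 2 + q ^ 3), ?_⟩
  rw [h3, h2, h1]
  conv_lhs => rw [h0]
  ring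
end

section
/- Let q be a prime power, let F be a finite field with q^{10} elements, and set N = q^4 − q^3 + q^2 − q + 1 (so N = (q^5+1)/(q+1)). Define L′ ⊆ F × F as the set of pairs (c,a) such that Δ(c) ≠ 0, Ω(c) = 0, D(c) ≠ 0 and a^N · D(c) = c·(c^{q^4+q^2} + c^{q^2} − c^{q^4+q^3−q} − c^{q^4+q^3}), where D(c) = c^{q^4+q} + c^q + c^{q^4+q^3+q} + c^{q+q^3} + c^{q^3+q^4}. Then the cardinality of L′ is at most (q^3 − q^2)(q^5 + 1). -/
open Polynomial

section aux

lemma lyness {K : Type*} [Field K] (t0 t1 t2 t3 t4 t5 : K)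
    (h0 : t2 * t0 = 1 - t1) (h1 : t3 * t1 = 1 - t2) (h2 : t4 * t2 = 1 - t3)
    (h3 : t5 * t3 = 1 - t4) (ht2 : t2 ≠ 0) (ht31 : t3 * t1 ≠ 0) :
    t5 = t0 := by
  have key : t2 * (1 - t2) * (t5 - t0) = 0 := by
    linear_combination (-(1 - t2)) * h0 + (1 - t5 * t2) * h1 + (-t1) * h2 + (t1 * t2) * h3
  have h12 : (1 : K) - t2 ≠ 0 := by rw [← h1]; exact ht31
  rcases mul_eq_zero.1 key with h | h
  · exact absurd h (mul_ne_zero ht2 h12)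
  · exact sub_eq_zero.1 h

lemma omega_of_delta_root {K : Type*} [Field K] (q : ℕ) (hq2 : 2 ≤ q)
    (frob : ∀ (x y : K) (i : ℕ), (x + y) ^ q ^ i = x ^ q ^ i + y ^ q ^ i)
    (frobneg : ∀ (x : K) (i : ℕ), (-x) ^ q ^ i = -(x ^ q ^ i))
    (α : K) (h : (1 + α) ^ (q ^ 2 + 1) + α ^ q = 0) :
    (1 + α) ^ (q ^ 4 + 1) + α ^ (q ^ 4 - q ^ 2 + 1) = 0 := by
  have hq0 : q ≠ 0 := by omega
  have hα : α ≠ 0 := by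
    intro h0
    rw [h0] at h
    simp [zero_pow hq0] at h
  have hu0 : (1 : K) + α ≠ 0 := by
    intro h0
    rw [h0] at h
    have : α ^ q = 0 := by
      simpa [zero_pow (by positivity : q ^ 2 + 1 ≠ 0)] using h
    exact hα (pow_eq_zero_iff hq0 |>.1 this)
  set u : K := 1 + α with hu
  set t : ℕ → K := fun i => u ^ q ^ i with ht
  set a : ℕ → K := fun i => α ^ q ^ i with ha
  have htne : ∀ i, t i ≠ 0 := fun i => pow_ne_zero _ hu0
  have hbase : α ^ q = -(u ^ (q ^ 2 + 1)) := by linear_combination h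
  have hA : ∀ i, a (i + 1) = -(t (i + 2) * t i) := by
    intro i
    have e1 : a (i + 1) = (α ^ q) ^ q ^ i := by
      show α ^ q ^ (i + 1) = _
      rw [← pow_mul, ← pow_succ']
    rw [e1, hbase, frobneg, ← pow_mul,
      show (q ^ 2 + 1) * q ^ i = q ^ (i + 2) + q ^ i from by ring, pow_add]
  have hT : ∀ i, t (i + 1) = 1 + a (i + 1) := by
    intro i
    show (1 + α) ^ q ^ (i + 1) = 1 + α ^ q ^ (i + 1)
    rw [frob, one_pow]
  have hH : ∀ i, t (i + 2) * t i = 1 - t (i + 1) := by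
    intro i
    rw [hT i, hA i]
    ring
  have ht5 : t 5 = t 0 :=
    lyness (t 0) (t 1) (t 2) (t 3) (t 4) (t 5) (hH 0) (hH 1) (hH 2) (hH 3)
      (htne 2) (mul_ne_zero (htne 3) (htne 1))
  have ht0 : t 0 = u := by show u ^ q ^ 0 = u; rw [pow_zero, pow_one]
  have ht6 : t 6 = t 1 := by
    have e1 : t 6 = (t 5) ^ q := by
      show u ^ q ^ 6 = (u ^ q ^ 5) ^ q
      rw [← pow_mul, ← pow_succ]
    rw [e1, ht5, ht0]
    show u ^ q = u ^ q ^ 1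
    rw [pow_one]
  have ht14 : t 1 * t 4 = -α := by
    have h4 := hH 4
    rw [ht6, ht5, ht0, hu] at h4
    linear_combination h4
  have hq24 : q ^ 2 ≤ q ^ 4 := Nat.pow_le_pow_right (by omega) (by omega)
  have hmul : (u ^ (q ^ 4 + 1) + α ^ (q ^ 4 - q ^ 2 + 1)) * α ^ q ^ 2 = 0 := by
    have e1 : α ^ (q ^ 4 - q ^ 2 + 1) * α ^ q ^ 2 = α ^ (q ^ 4 + 1) := by
      rw [← pow_add, show q ^ 4 - q ^ 2 + 1 + q ^ 2 = q ^ 4 + 1 from by omega]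
    have e2 : u ^ (q ^ 4 + 1) = t 4 * u := by
      show u ^ (q ^ 4 + 1) = u ^ q ^ 4 * u
      rw [pow_add]; try rw [pow_one]
    have e3 : α ^ (q ^ 4 + 1) = a 4 * α := by
      show α ^ (q ^ 4 + 1) = α ^ q ^ 4 * α
      rw [pow_add]; try rw [pow_one]
    have e4 : a 2 = -(t 3 * t 1) := hA 1
    have e5 : a 4 = -(t 0 * t 3) := by rw [hA 3, ht5]
    have e6 : α ^ q ^ 2 = a 2 := rfl
    rw [add_mul, e1, e6, e2, e3, e4, e5, ← ht0]
    linear_combination (-(t 3 * t 0)) * ht14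
  rcases mul_eq_zero.1 hmul with h' | h'
  · exact h'
  · exact absurd h' (pow_ne_zero _ hα)

end aux



/-- For `F` with `q^10` elements and `N = q^4 − q^3 + q^2 − q + 1`, the set `L′`
of pairs `(c,a)` with `Δ(c) ≠ 0`, `Ω(c) = 0`, `D(c) ≠ 0` and
`a^N · D(c) = c·(c^(q^4+q^2) + c^(q^2) − c^(q^4+q^3−q) − c^(q^4+q^3))` has at most
`(q^3 − q^2)(q^5 + 1)` elements. -/
theorem stmt_13 (q : ℕ) (hq : IsPrimePow q) (F : Type*) [Field F] [Fintype F]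
    (hF : Fintype.card F = q ^ 10) :
    {p : F × F |
        (1 + p.1) ^ (q ^ 2 + 1) + p.1 ^ q ≠ 0 ∧
        (1 + p.1) ^ (q ^ 4 + 1) + p.1 ^ (q ^ 4 - q ^ 2 + 1) = 0 ∧
        p.1 ^ (q ^ 4 + q) + p.1 ^ q + p.1 ^ (q ^ 4 + q ^ 3 + q)
            + p.1 ^ (q + q ^ 3) + p.1 ^ (q ^ 3 + q ^ 4) ≠ 0 ∧
        p.2 ^ (q ^ 4 - q ^ 3 + q ^ 2 - q + 1) *
            (p.1 ^ (q ^ 4 + q) + p.1 ^ q + p.1 ^ (q ^ 4 + q ^ 3 + q)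
              + p.1 ^ (q + q ^ 3) + p.1 ^ (q ^ 3 + q ^ 4)) =
          p.1 * (p.1 ^ (q ^ 4 + q ^ 2) + p.1 ^ (q ^ 2)
            - p.1 ^ (q ^ 4 + q ^ 3 - q) - p.1 ^ (q ^ 4 + q ^ 3))}.ncard ≤
      (q ^ 3 - q ^ 2) * (q ^ 5 + 1) := by
  classical
  obtain ⟨p, n, hpp, hn, hpq⟩ := hq
  have hp : p.Prime := Nat.prime_iff.2 hpp
  haveI : Fact p.Prime := ⟨hp⟩
  have hq2 : 2 ≤ q := by
    rw [← hpq]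
    calc 2 ≤ p := hp.two_le
    _ = p ^ 1 := (pow_one p).symm
    _ ≤ p ^ n := Nat.pow_le_pow_right hp.pos hn
  have hq0 : q ≠ 0 := by omega
  -- characteristic of F is p
  haveI hcharF : CharP F p := by
    obtain ⟨m, hm, hcard⟩ := FiniteField.card F (ringChar F)
    have h1 : ringChar F ∣ p ^ (10 * n) := by
      have : ringChar F ^ (m : ℕ) = p ^ (10 * n) := by
        rw [← hcard, hF, ← hpq, ← pow_mul, mul_comm]
      exact this ▸ dvd_pow_self (ringChar F) (by positivity)
    have h2 : ringChar F = p :=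
      (Nat.prime_dvd_prime_iff_eq hm hp).1 (hm.dvd_of_dvd_pow h1)
    exact h2 ▸ ringChar.charP F
  set K := AlgebraicClosure F
  haveI : CharP K p := charP_of_injective_algebraMap (algebraMap F K).injective p
  have frob : ∀ (x y : K) (i : ℕ), (x + y) ^ q ^ i = x ^ q ^ i + y ^ q ^ i := by
    intro x y i
    rw [← hpq, ← pow_mul]
    exact add_pow_char_pow x y p (n * i)
  have frobneg : ∀ (x : K) (i : ℕ), (-x) ^ q ^ i = -(x ^ q ^ i) := by
    intro x i
    rw [← hpq, ← pow_mul, ← zero_sub, sub_pow_char_pow, zero_pow (pow_ne_zero _ hp.ne_zero),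
      zero_sub]
  -- the polynomials
  set Δp : F[X] := (X + C 1) ^ (q ^ 2 + 1) + X ^ q with hΔp
  set Ωp : F[X] := (X + C 1) ^ (q ^ 4 + 1) + X ^ (q ^ 4 - q ^ 2 + 1) with hΩp
  have hq24 : q ^ 2 ≤ q ^ 4 := Nat.pow_le_pow_right (by omega) (by omega)
  have hqq2 : q ≤ q ^ 2 := Nat.le_self_pow (by norm_num) q
  have hmonXC : ((X + C 1 : F[X])).Monic := monic_X_add_C 1
  have hdeglt : (X ^ q : F[X]).degree < ((X + C 1 : F[X]) ^ (q ^ 2 + 1)).degree := by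
    rw [degree_X_pow, degree_pow, degree_X_add_C]
    simp only [nsmul_eq_mul, mul_one]
    exact_mod_cast (by omega : q < q ^ 2 + 1)
  have hΔmon : Δp.Monic := (hmonXC.pow _).add_of_left hdeglt
  have hΔdeg : Δp.natDegree = q ^ 2 + 1 := by
    rw [hΔp, natDegree_add_eq_left_of_degree_lt hdeglt, hmonXC.natDegree_pow,
      natDegree_X_add_C, mul_one]
  have hΩne : Ωp ≠ 0 := by
    intro h0
    have he := congrArg (eval 0) h0
    rw [hΩp] at he
    simp [zero_pow (show q ^ 4 - q ^ 2 + 1 ≠ 0 by omega)] at he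
  have hΩdeg : Ωp.natDegree ≤ q ^ 4 + 1 := by
    refine le_trans (natDegree_add_le _ _) ?_
    rw [hmonXC.natDegree_pow, natDegree_X_add_C, mul_one, natDegree_X_pow]
    omega
  -- separability of Δp
  have hqF0 : ((q : ℕ) : F) = 0 := by
    rw [← hpq]
    push_cast
    rw [CharP.cast_eq_zero F p]
    exact zero_pow hn.ne'
  have hcF : ((q ^ 2 + 1 : ℕ) : F) = 1 := by
    push_cast [hqF0]
    norm_num
  have hder : Δp.derivative = (X + C 1 : F[X]) ^ (q ^ 2) := by
    rw [hΔp, derivative_add, derivative_pow, derivative_X_pow]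
    simp [hcF, hqF0]
  have hsep : Δp.Separable := by
    rw [Polynomial.separable_def, hder]
    apply IsCoprime.pow_right
    have hirr : Irreducible (X - C (-1 : F)) := irreducible_X_sub_C (-1)
    have hnd : ¬ (X - C (-1 : F)) ∣ Δp := by
      rw [dvd_iff_isRoot]
      intro hroot
      rw [IsRoot, hΔp] at hroot
      simp only [eval_add, eval_pow, eval_X, eval_C, eval_one] at hroot
      rw [neg_add_cancel, zero_pow (show q ^ 2 + 1 ≠ 0 by omega), zero_add] at hroot
      exact pow_ne_zero q (by norm_num : (-1 : F) ≠ 0) hroot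
    have hcop := (hirr.coprime_iff_not_dvd).2 hnd
    have h2 : (X - C (-1 : F)) = X + C 1 := by
      rw [map_neg, sub_neg_eq_add]
    rw [h2] at hcop
    exact hcop.symm
  -- divisibility over the algebraic closure
  set f := algebraMap F K with hf
  have hΔkne : Δp.map f ≠ 0 := (hΔmon.map f).ne_zero
  have hΩkne : Ωp.map f ≠ 0 := Polynomial.map_ne_zero hΩne
  have hdvdK : Δp.map f ∣ Ωp.map f := by
    apply (IsAlgClosed.splits (Δp.map f)).dvd_of_roots_le_roots hΔkne
    rw [Multiset.le_iff_subset (Polynomial.nodup_roots (hsep.map (f := f)))]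
    intro α hα
    rw [mem_roots'] at hα ⊢
    refine ⟨hΩkne, ?_⟩
    have hroot : (1 + α) ^ (q ^ 2 + 1) + α ^ q = 0 := by
      have h2 := hα.2
      rw [IsRoot, hΔp] at h2
      simp only [Polynomial.map_add, Polynomial.map_pow, Polynomial.map_X, Polynomial.map_one,
        map_C, map_one, eval_add, eval_pow, eval_X, eval_C, eval_one] at h2
      first
        | exact h2
        | (rw [add_comm 1 α]; exact h2)
    have hΩα := omega_of_delta_root q hq2 frob frobneg α hroot
    rw [IsRoot, hΩp]
    simp only [Polynomial.map_add, Polynomial.map_pow, Polynomial.map_X, Polynomial.map_one,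
      map_C, map_one, eval_add, eval_pow, eval_X, eval_C, eval_one]
    first
      | exact hΩα
      | (rw [add_comm α 1]; exact hΩα)
      | (rw [add_comm 1 α] at hΩα; exact hΩα)
  have hdvd : Δp ∣ Ωp := (map_dvd_map f f.injective hΔmon).1 hdvdK
  obtain ⟨g, hg⟩ := hdvd
  have hgne : g ≠ 0 := by
    rintro rfl
    rw [mul_zero] at hg
    exact hΩne hg
  have hgdeg : g.natDegree ≤ q ^ 4 - q ^ 2 := by
    have hmul := natDegree_mul hΔmon.ne_zero hgne
    rw [← hg, hΔdeg] at hmul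
    omega
  -- counting
  set N := q ^ 4 - q ^ 3 + q ^ 2 - q + 1 with hN
  have hNpos : 0 < N := by omega
  set D : F → F := fun c => c ^ (q ^ 4 + q) + c ^ q + c ^ (q ^ 4 + q ^ 3 + q)
      + c ^ (q + q ^ 3) + c ^ (q ^ 3 + q ^ 4) with hDdef
  set v : F → F := fun c => (c * (c ^ (q ^ 4 + q ^ 2) + c ^ (q ^ 2)
      - c ^ (q ^ 4 + q ^ 3 - q) - c ^ (q ^ 4 + q ^ 3))) * (D c)⁻¹ with hvdef
  set T : Finset (F × F) := g.roots.toFinset.biUnion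
      (fun c => ((X ^ N - C (v c)).roots.toFinset).image (fun a => (c, a))) with hTdef
  have hsub : {p : F × F |
        (1 + p.1) ^ (q ^ 2 + 1) + p.1 ^ q ≠ 0 ∧
        (1 + p.1) ^ (q ^ 4 + 1) + p.1 ^ (q ^ 4 - q ^ 2 + 1) = 0 ∧
        p.1 ^ (q ^ 4 + q) + p.1 ^ q + p.1 ^ (q ^ 4 + q ^ 3 + q)
            + p.1 ^ (q + q ^ 3) + p.1 ^ (q ^ 3 + q ^ 4) ≠ 0 ∧
        p.2 ^ (q ^ 4 - q ^ 3 + q ^ 2 - q + 1) *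
            (p.1 ^ (q ^ 4 + q) + p.1 ^ q + p.1 ^ (q ^ 4 + q ^ 3 + q)
              + p.1 ^ (q + q ^ 3) + p.1 ^ (q ^ 3 + q ^ 4)) =
          p.1 * (p.1 ^ (q ^ 4 + q ^ 2) + p.1 ^ (q ^ 2)
            - p.1 ^ (q ^ 4 + q ^ 3 - q) - p.1 ^ (q ^ 4 + q ^ 3))} ⊆ (T : Set (F × F)) := by
    rintro ⟨c, a⟩ ⟨h1, h2, h3, h4⟩
    rw [Finset.mem_coe, hTdef, Finset.mem_biUnion]
    refine ⟨c, ?_, ?_⟩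
    · rw [Multiset.mem_toFinset, mem_roots']
      refine ⟨hgne, ?_⟩
      have hΩc : eval c Ωp = 0 := by
        rw [hΩp]
        simp only [eval_add, eval_pow, eval_X, eval_C, eval_one]
        rw [add_comm c 1]
        exact h2
      have hΔc : eval c Δp ≠ 0 := by
        rw [hΔp]
        simp only [eval_add, eval_pow, eval_X, eval_C, eval_one]
        rw [add_comm c 1]
        exact h1
      have heq := congrArg (eval c) hg
      rw [hΩc, eval_mul] at heq
      exact (mul_eq_zero.1 heq.symm).resolve_left hΔc
    · rw [Finset.mem_image]
      refine ⟨a, ?_, rfl⟩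
      rw [Multiset.mem_toFinset, mem_roots']
      refine ⟨X_pow_sub_C_ne_zero hNpos _, ?_⟩
      show eval a (X ^ N - C (v c)) = 0
      rw [eval_sub, eval_pow, eval_X, eval_C, sub_eq_zero, hvdef]
      have hDne : D c ≠ 0 := h3
      field_simp
      linear_combination h4
  have hcard1 : T.card ≤ g.roots.toFinset.card * N := by
    refine le_trans Finset.card_biUnion_le ?_
    refine le_trans (Finset.sum_le_card_nsmul _ _ N ?_) ?_
    · intro c _
      refine le_trans Finset.card_image_le ?_
      refine le_trans (Multiset.toFinset_card_le _) ?_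
      refine le_trans (Polynomial.card_roots' _) ?_
      rw [natDegree_X_pow_sub_C]
    · rw [smul_eq_mul]
  have hcard2 : g.roots.toFinset.card ≤ q ^ 4 - q ^ 2 :=
    le_trans (Multiset.toFinset_card_le _) (le_trans (Polynomial.card_roots' _) hgdeg)
  have harith : (q ^ 4 - q ^ 2) * N = (q ^ 3 - q ^ 2) * (q ^ 5 + 1) := by
    have e1 : q ^ 3 ≤ q ^ 4 := Nat.pow_le_pow_right (by omega) (by omega)
    have e2 : q ^ 2 ≤ q ^ 3 := Nat.pow_le_pow_right (by omega) (by omega)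
    have e3 : q ≤ q ^ 4 - q ^ 3 + q ^ 2 := by omega
    rw [hN]
    zify [hq24, e1, e2, e3, hqq2]
    ring
  refine le_trans (Set.ncard_le_ncard hsub T.finite_toSet) ?_
  rw [Set.ncard_coe_finset]
  refine le_trans hcard1 (le_trans (Nat.mul_le_mul_right _ hcard2) (le_of_eq harith))
end

section
/- Let q be a prime power and let F be a finite field with q^{10} elements. For every c ∈ F, one has (c^q + 1)·θ(c) = (c + c^{q^2} + c^{q^2+1})·Δ(c)^q − c^{q^2}·Δ(c), where Δ(c) = (1+c)^{q^2+1} + c^q and θ(c) = c + c^{q^2+1} + c^{q^3+1} + c^{q^3+q^2} + c^{q^3+q^2+1}. -/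
/-- For `F` with `q^10` elements and every `c : F`,
`(c^q + 1)·θ(c) = (c + c^(q^2) + c^(q^2+1))·Δ(c)^q − c^(q^2)·Δ(c)`, where
`Δ(c) = (1+c)^(q^2+1) + c^q` and `θ(c) = c + c^(q^2+1) + c^(q^3+1) + c^(q^3+q^2) + c^(q^3+q^2+1)`. -/
theorem stmt_16 (q : ℕ) (hq : IsPrimePow q) (F : Type*) [Field F] [Fintype F]
    (hF : Fintype.card F = q ^ 10) :
    ∀ c : F,
      (c ^ q + 1) * (c + c ^ (q ^ 2 + 1) + c ^ (q ^ 3 + 1) + c ^ (q ^ 3 + q ^ 2)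
          + c ^ (q ^ 3 + q ^ 2 + 1)) =
        (c + c ^ (q ^ 2) + c ^ (q ^ 2 + 1)) * ((1 + c) ^ (q ^ 2 + 1) + c ^ q) ^ q
          - c ^ (q ^ 2) * ((1 + c) ^ (q ^ 2 + 1) + c ^ q) := by
  obtain ⟨p, n, hp, hn, rfl⟩ := hq
  have hp' : p.Prime := hp.nat_prime
  set r := ringChar F with hr
  have hrp : CharP F r := ringChar.charP F
  obtain ⟨m, hrprime, hcard⟩ := FiniteField.card F r
  have hpr : p = r := by
    have hdvd : p ∣ r ^ (m : ℕ) := by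
      rw [← hcard, hF]
      exact dvd_pow (dvd_pow_self p hn.ne') (by positivity)
    exact (Nat.prime_dvd_prime_iff_eq hp' hrprime).mp (hp'.dvd_of_dvd_pow hdvd)
  subst hpr
  haveI := Fact.mk hp'
  intro c
  have hf : ∀ a b : F, (a + b) ^ r ^ n = a ^ r ^ n + b ^ r ^ n := fun a b =>
    add_pow_char_pow (x := a) (y := b) r n
  set Q := r ^ n with hQ
  set x := c ^ Q with hx
  set y := x ^ Q with hy
  set z := y ^ Q with hz
  have h2 : c ^ Q ^ 2 = y := by rw [pow_two, pow_mul, ← hx, ← hy]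
  have h3 : c ^ Q ^ 3 = z := by
    rw [pow_succ, pow_mul, h2, ← hz]
  have h1c : (1 + c) ^ Q = 1 + x := by rw [hf, one_pow, hx]
  have h1x : (1 + x) ^ Q = 1 + y := by rw [hf, one_pow, hy]
  have h1y : (1 + y) ^ Q = 1 + z := by rw [hf, one_pow, hz]
  have hΔ : (1 + c) ^ (Q ^ 2 + 1) = (1 + y) * (1 + c) := by
    rw [pow_add, pow_one, pow_two, pow_mul, h1c, h1x]
  have hΔq : ((1 + y) * (1 + c) + x) ^ Q = (1 + z) * (1 + x) + y := by
    rw [hf, mul_pow, h1y, h1c, hy]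
  rw [pow_add, h2, pow_one, pow_add, h3, pow_one, pow_add, h3, h2,
    pow_add, pow_add, h3, h2, pow_one, hΔ, hΔq]
  ring
end

section
/- Let q be a prime power and let F be a finite field with q^{10} elements. Suppose c, d ∈ F with c ≠ 0 satisfy d^{q+1} + c^q·(c^{q^2})^{-1}·d − c = 0 and (c^{q^3+1} + c + c^{q^3+q^2+1} + c^{q^2+1} + c^{q^3+q^2})^q · d = (c^{q^3+q} + c^q − c^{q^3+q^2} − c^{q^3+q^2−1})^q · c. Then (1+c)^{q^4+1} + c^{q^4−q^2+1} = 0. -/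
/-- For `F` with `q^10` elements, if `c ≠ 0` and `c, d` satisfy
`d^(q+1) + c^q·(c^(q^2))⁻¹·d − c = 0` and
`(c^(q^3+1) + c + c^(q^3+q^2+1) + c^(q^2+1) + c^(q^3+q^2))^q · d
  = (c^(q^3+q) + c^q − c^(q^3+q^2) − c^(q^3+q^2−1))^q · c`,
then `(1+c)^(q^4+1) + c^(q^4−q^2+1) = 0`. -/
theorem stmt_17 (q : ℕ) (hq : IsPrimePow q) (F : Type*) [Field F] [Fintype F]
    (hF : Fintype.card F = q ^ 10) (c d : F) (hc : c ≠ 0)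
    (h1 : d ^ (q + 1) + c ^ q * (c ^ (q ^ 2))⁻¹ * d - c = 0)
    (h2 : (c ^ (q ^ 3 + 1) + c + c ^ (q ^ 3 + q ^ 2 + 1) + c ^ (q ^ 2 + 1)
            + c ^ (q ^ 3 + q ^ 2)) ^ q * d =
          (c ^ (q ^ 3 + q) + c ^ q - c ^ (q ^ 3 + q ^ 2)
            - c ^ (q ^ 3 + q ^ 2 - 1)) ^ q * c) :
    (1 + c) ^ (q ^ 4 + 1) + c ^ (q ^ 4 - q ^ 2 + 1) = 0 := by
  classical
  -- Characteristic setup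
  obtain ⟨p, k, hpp, hk, hpk⟩ := hq
  have hp : p.Prime := Nat.prime_iff.mpr hpp
  haveI : Fact p.Prime := ⟨hp⟩
  have hq2 : 2 ≤ q := by
    rw [← hpk]
    calc 2 ≤ p := hp.two_le
    _ = p ^ 1 := (pow_one p).symm
    _ ≤ p ^ k := Nat.pow_le_pow_right hp.one_lt.le hk
  haveI cr : CharP F (ringChar F) := ringChar.charP F
  obtain ⟨n, hrp, hcard⟩ := FiniteField.card F (ringChar F)
  have hpr : p = ringChar F := by
    have hd : p ∣ ringChar F ^ (n : ℕ) := by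
      rw [← hcard, hF, ← hpk, ← pow_mul]
      exact dvd_pow_self p (by positivity)
    exact (Nat.prime_dvd_prime_iff_eq hp hrp).mp (hp.dvd_of_dvd_pow hd)
  haveI hcharp : CharP F p := by rw [hpr]; exact cr
  have hadd : ∀ x y : F, (x + y) ^ q = x ^ q + y ^ q := by
    intro x y; rw [← hpk]; exact add_pow_char_pow x y p k
  have hsub : ∀ x y : F, (x - y) ^ q = x ^ q - y ^ q := by
    intro x y; rw [← hpk]; exact sub_pow_char_pow (p := p) x y k
  have haddn : ∀ (m : ℕ) (x y : F), (x + y) ^ q ^ m = x ^ q ^ m + y ^ q ^ m := by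
    intro m
    induction m with
    | zero => intro x y; simp
    | succ m ih =>
      intro x y
      rw [pow_succ, pow_mul, ih, hadd, ← pow_mul, ← pow_mul, ← pow_succ]
  have hzero : ∀ x : F, x ^ q = 0 → x = 0 := by
    intro x h
    exact (pow_eq_zero_iff (show q ≠ 0 by omega)).mp h
  -- Reduce the goal to the "cleared denominator" form
  suffices hΩ : c ^ (q ^ 2) * ((1 + c ^ (q ^ 4)) * (1 + c)) + c ^ (q ^ 4) * c = 0 by
    have h1c : (1 + c) ^ (q ^ 4) = 1 + c ^ (q ^ 4) := by
      rw [haddn 4 1 c, one_pow]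
    have h24 : q ^ 2 ≤ q ^ 4 := Nat.pow_le_pow_right (by omega) (by norm_num)
    have e24 : q ^ 4 - q ^ 2 + 1 + q ^ 2 = q ^ 4 + 1 := by
      rw [Nat.add_right_comm, Nat.sub_add_cancel h24]
    have hmul : ((1 + c) ^ (q ^ 4 + 1) + c ^ (q ^ 4 - q ^ 2 + 1)) * c ^ (q ^ 2) = 0 := by
      rw [add_mul, ← pow_add, e24, pow_succ, h1c, pow_succ]
      linear_combination hΩ
    exact (mul_eq_zero.mp hmul).resolve_right (pow_ne_zero _ hc)
  -- Clean up the two hypotheses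
  have hinv : (c ^ (q ^ 2))⁻¹ * c ^ (q ^ 2) = 1 := inv_mul_cancel₀ (pow_ne_zero _ hc)
  have E1 : d ^ q * d * c ^ (q ^ 2) + c ^ q * d - c * c ^ (q ^ 2) = 0 := by
    rw [pow_succ] at h1
    linear_combination c ^ (q ^ 2) * h1 - c ^ q * d * hinv
  have hBexp : (q ^ 3 + q ^ 2 - 1) * q + q = q ^ 4 + q ^ 3 := by
    have h3 : 1 ≤ q ^ 3 + q ^ 2 := le_trans (Nat.one_le_pow 3 q (by omega)) (Nat.le_add_right _ _)
    calc (q ^ 3 + q ^ 2 - 1) * q + q = (q ^ 3 + q ^ 2 - 1 + 1) * q := (Nat.succ_mul _ _).symm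
    _ = (q ^ 3 + q ^ 2) * q := by rw [Nat.sub_add_cancel h3]
    _ = q ^ 4 + q ^ 3 := by ring
  have hB : c ^ ((q ^ 3 + q ^ 2 - 1) * q) * c ^ q = c ^ (q ^ 4 + q ^ 3) := by
    rw [← pow_add, hBexp]
  simp only [hadd, hsub, ← pow_mul] at h2
  have E2 : (c ^ (q ^ 4 + q) + c ^ q + c ^ (q ^ 4 + q ^ 3 + q) + c ^ (q ^ 3 + q)
        + c ^ (q ^ 4 + q ^ 3)) * (d * c ^ q)
      = (c ^ (q ^ 4 + q ^ 2 + q) + c ^ (q ^ 2 + q) - c ^ (q ^ 4 + q ^ 3 + q)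
        - c ^ (q ^ 4 + q ^ 3)) * c := by
    linear_combination c ^ q * h2 - c * hB
  have E3 : (c ^ (q ^ 5 + q ^ 2) + c ^ (q ^ 2) + c ^ (q ^ 5 + q ^ 4 + q ^ 2)
        + c ^ (q ^ 4 + q ^ 2) + c ^ (q ^ 5 + q ^ 4)) * (d ^ q * c ^ (q ^ 2))
      = (c ^ (q ^ 5 + q ^ 3 + q ^ 2) + c ^ (q ^ 3 + q ^ 2) - c ^ (q ^ 5 + q ^ 4 + q ^ 2)
        - c ^ (q ^ 5 + q ^ 4)) * c ^ q := by
    have h := congrArg (fun x : F => x ^ q) E2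
    simp only [mul_pow, hadd, hsub, ← pow_mul] at h
    linear_combination h
  -- The key elimination identity
  have key : (c ^ q * c * (c ^ (q ^ 2) * c ^ (q ^ 4))) *
      ((c ^ (q ^ 3) * ((1 + c ^ (q ^ 5)) * (1 + c ^ q)) + c ^ (q ^ 5) * c ^ q) *
       ((1 + c ^ (q ^ 2)) * (1 + c ^ (q ^ 4)) + c ^ (q ^ 3))) = 0 := by
    linear_combination
      (-((c ^ (q ^ 4 + q) + c ^ q + c ^ (q ^ 4 + q ^ 3 + q) + c ^ (q ^ 3 + q)
          + c ^ (q ^ 4 + q ^ 3)) *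
         (c ^ (q ^ 5 + q ^ 2) + c ^ (q ^ 2) + c ^ (q ^ 5 + q ^ 4 + q ^ 2)
          + c ^ (q ^ 4 + q ^ 2) + c ^ (q ^ 5 + q ^ 4)) * c ^ q)) * E1
      + ((c ^ (q ^ 4 + q ^ 2 + q) + c ^ (q ^ 2 + q) - c ^ (q ^ 4 + q ^ 3 + q)
          - c ^ (q ^ 4 + q ^ 3)) * c) * E3
      + ((c ^ (q ^ 5 + q ^ 2) + c ^ (q ^ 2) + c ^ (q ^ 5 + q ^ 4 + q ^ 2)
          + c ^ (q ^ 4 + q ^ 2) + c ^ (q ^ 5 + q ^ 4)) * d ^ q * c ^ (q ^ 2)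
         + c ^ q * (c ^ (q ^ 5 + q ^ 2) + c ^ (q ^ 2) + c ^ (q ^ 5 + q ^ 4 + q ^ 2)
          + c ^ (q ^ 4 + q ^ 2) + c ^ (q ^ 5 + q ^ 4))) * E2
  have hGM := (mul_eq_zero.mp key).resolve_left
    (by
      apply mul_ne_zero
      · exact mul_ne_zero (pow_ne_zero _ hc) hc
      · exact mul_ne_zero (pow_ne_zero _ hc) (pow_ne_zero _ hc))
  -- From `N = 0` we can conclude
  have NΩ : ((1 + c ^ q) * (1 + c ^ (q ^ 3)) + c ^ (q ^ 2) = 0) →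
      c ^ (q ^ 2) * ((1 + c ^ (q ^ 4)) * (1 + c)) + c ^ (q ^ 4) * c = 0 := by
    intro hN
    have hS9 : (1 + c) * (1 + c ^ (q ^ 2)) + c ^ q = 0 := by
      apply hzero
      have hpush : ((1 + c) * (1 + c ^ (q ^ 2)) + c ^ q) ^ q
          = (1 + c ^ q) * (1 + c ^ (q ^ 3)) + c ^ (q ^ 2) := by
        simp only [hadd, mul_pow, one_pow, ← pow_mul]; ring
      rw [hpush, hN]
    have hS1 : (1 + c ^ (q ^ 2)) * (1 + c ^ (q ^ 4)) + c ^ (q ^ 3) = 0 := by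
      have hpush : ((1 + c ^ q) * (1 + c ^ (q ^ 3)) + c ^ (q ^ 2)) ^ q
          = (1 + c ^ (q ^ 2)) * (1 + c ^ (q ^ 4)) + c ^ (q ^ 3) := by
        simp only [hadd, mul_pow, one_pow, ← pow_mul]; ring
      rw [← hpush, hN, zero_pow (show q ≠ 0 by omega)]
    have ht2 : (1 + c ^ (q ^ 2) : F) ≠ 0 := by
      intro h0
      have hcq : c ^ q = 0 := by linear_combination hS9 - (1 + c) * h0
      exact hc ((pow_eq_zero_iff (show q ≠ 0 by omega)).mp hcq)
    have hT : (1 + c ^ (q ^ 2)) * ((1 + c) * (1 + c ^ (q ^ 2)) * (1 + c ^ (q ^ 4))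
        + 1 - (1 + c) - (1 + c ^ (q ^ 4))) = 0 := by
      linear_combination hN - (1 + c ^ (q ^ 3)) * hS9
        - (1 - (1 + c) * (1 + c ^ (q ^ 2))) * hS1
    have hA := (mul_eq_zero.mp hT).resolve_left ht2
    linear_combination hA
  rcases mul_eq_zero.mp hGM with hG | hM
  · -- the factor is the Frobenius image of the goal
    apply hzero
    have hpush : (c ^ (q ^ 2) * ((1 + c ^ (q ^ 4)) * (1 + c)) + c ^ (q ^ 4) * c) ^ q
        = c ^ (q ^ 3) * ((1 + c ^ (q ^ 5)) * (1 + c ^ q)) + c ^ (q ^ 5) * c ^ q := by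
      simp only [hadd, mul_pow, one_pow, ← pow_mul]; ring
    rw [hpush, hG]
  · -- the factor is the Frobenius image of N
    apply NΩ
    apply hzero
    have hpush : ((1 + c ^ q) * (1 + c ^ (q ^ 3)) + c ^ (q ^ 2)) ^ q
        = (1 + c ^ (q ^ 2)) * (1 + c ^ (q ^ 4)) + c ^ (q ^ 3) := by
      simp only [hadd, mul_pow, one_pow, ← pow_mul]; ring
    rw [hpush, hM]
end

section
/- Let q be a prime power, let k ≥ 1, and let F be a finite field with q^k elements. For all nonzero X, A ∈ F, setting x = X^{q−1} and a = A^{q−1}, one has ∑_{j=0}^{k−1} (A·X)^{q^j} = 0 if and only if ∑_{j=0}^{k−1} (a·x)^{(q^j−1)/(q−1)} = 0. -/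
/-- For `F` a finite field with `q^k` elements and nonzero `X, A : F`, setting
`x = X^(q−1)` and `a = A^(q−1)`, one has `∑_{j<k} (A·X)^(q^j) = 0` iff
`∑_{j<k} (a·x)^((q^j−1)/(q−1)) = 0`. -/
theorem stmt_19 (q k : ℕ) (hq : IsPrimePow q) (hk : 1 ≤ k)
    (F : Type*) [Field F] [Fintype F] (hF : Fintype.card F = q ^ k)
    (X A : F) (hX : X ≠ 0) (hA : A ≠ 0) (x a : F)
    (hx : x = X ^ (q - 1)) (ha : a = A ^ (q - 1)) :
    (∑ j ∈ Finset.range k, (A * X) ^ (q ^ j) = 0) ↔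
      (∑ j ∈ Finset.range k, (a * x) ^ ((q ^ j - 1) / (q - 1)) = 0) := by
  have hq2 : 2 ≤ q := hq.two_le
  have hAX : A * X ≠ 0 := mul_ne_zero hA hX
  have key : ∀ j, (a * x) ^ ((q ^ j - 1) / (q - 1)) = (A * X) ^ (q ^ j - 1) := by
    intro j
    have hdvd : (q - 1) ∣ (q ^ j - 1) := by
      simpa using Nat.sub_dvd_pow_sub_pow q 1 j
    rw [hx, ha, ← mul_pow, ← pow_mul, Nat.mul_div_cancel' hdvd]
  have key2 : ∀ j, (A * X) ^ (q ^ j) = (A * X) * (A * X) ^ (q ^ j - 1) := by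
    intro j
    rw [← pow_succ']
    congr 1
    have : 1 ≤ q ^ j := Nat.one_le_pow _ _ (by omega)
    omega
  simp_rw [key, key2, ← Finset.mul_sum]
  rw [mul_eq_zero, or_iff_right hAX]
end
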